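/- For the entropy E_{k,p}(u,v) = (uv)^(-k) + u^(p+1/2)·v^(1/2−p) and the diffusion matrix B(u,v) = [[1, u/v], [v/u, 1]], for any vector U_x = (u_x, v_x) one has U_xᵀ·(∇²E_{k,p})·B·U_x = k(2k+1)·(uv)^(-k-2)·(v·u_x + u·v_x)²; i.e., the contribution of the term u^(p+1/2)·v^(1/2−p) vanishes. -/

import Mathlib

open Real Matrix

noncomputable def pdu (f : ℝ → ℝ → ℝ) (u v : ℝ) : ℝ := deriv (fun x => f x v) u
noncomputable def pdv (f : ℝ → ℝ → ℝ) (u v : ℝ) : ℝ := deriv (fun y => f u y) v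

noncomputable def hess (f : ℝ → ℝ → ℝ) (u v : ℝ) : Matrix (Fin 2) (Fin 2) ℝ :=
  !![pdu (pdu f) u v, pdv (pdu f) u v;
     pdu (pdv f) u v, pdv (pdv f) u v]

/-!
On the positive quadrant `(uv)^(-k) = u^(-k) v^(-k)`, so `E_{k,p}` is a sum of two monomials
`u^a v^b`. The Hessian of the monomial of degree one (`b = 1 - a`) is a multiple of
`!![v/u, -1; -1, u/v]`, which `B` annihilates. Since `B U_x = (v u_x + u v_x) • (1/v, 1/u)`,
the monomial `u^(-k) v^(-k)` contributes `k(2k+1) (uv)^(-k-2) (v u_x + u v_x)²`.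
-/

open Filter Topology

section Hessian

variable {f fu fv : ℝ → ℝ → ℝ} {u v : ℝ}

theorem hess_eq_of_hasDerivAt {a b c d : ℝ}
    (hfu : ∀ᶠ q in 𝓝 (u, v), HasDerivAt (fun x => f x q.2) (fu q.1 q.2) q.1)
    (hfv : ∀ᶠ q in 𝓝 (u, v), HasDerivAt (fun y => f q.1 y) (fv q.1 q.2) q.2)
    (ha : HasDerivAt (fun x => fu x v) a u) (hb : HasDerivAt (fun y => fu u y) b v)
    (hc : HasDerivAt (fun x => fv x v) c u) (hd : HasDerivAt (fun y => fv u y) d v) :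
    hess f u v = !![a, b; c, d] := by
  have hleft : Tendsto (fun x => (x, v)) (𝓝 u) (𝓝 (u, v)) :=
    (continuous_id.prodMk continuous_const).tendsto u
  have hright : Tendsto (fun y => (u, y)) (𝓝 v) (𝓝 (u, v)) :=
    (continuous_const.prodMk continuous_id).tendsto v
  have hpdu_left : (fun x => pdu f x v) =ᶠ[𝓝 u] fun x => fu x v :=
    (hleft.eventually hfu).mono fun _ h => h.deriv
  have hpdu_right : (fun y => pdu f u y) =ᶠ[𝓝 v] fun y => fu u y :=
    (hright.eventually hfu).mono fun _ h => h.deriv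
  have hpdv_left : (fun x => pdv f x v) =ᶠ[𝓝 u] fun x => fv x v :=
    (hleft.eventually hfv).mono fun _ h => h.deriv
  have hpdv_right : (fun y => pdv f u y) =ᶠ[𝓝 v] fun y => fv u y :=
    (hright.eventually hfv).mono fun _ h => h.deriv
  rw [hess, pdu, pdv, pdu, pdv, hpdu_left.deriv_eq, hpdu_right.deriv_eq, hpdv_left.deriv_eq,
    hpdv_right.deriv_eq, ha.deriv, hb.deriv, hc.deriv, hd.deriv]

end Hessian

section Monomial

variable {x y : ℝ} (a b : ℝ)

theorem hasDerivAt_monomial_left (hx : 0 < x) :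
    HasDerivAt (fun x => x ^ a * y ^ b) (a * (x ^ (a - 1) * y ^ b)) x := by
  simpa only [mul_assoc] using (hasDerivAt_rpow_const (p := a) (Or.inl hx.ne')).mul_const (y ^ b)

theorem hasDerivAt_monomial_right (hy : 0 < y) :
    HasDerivAt (fun y => x ^ a * y ^ b) (b * (x ^ a * y ^ (b - 1))) y := by
  simpa only [mul_left_comm] using
    (hasDerivAt_rpow_const (p := b) (Or.inl hy.ne')).const_mul (x ^ a)

end Monomial

noncomputable def monomialHess (a b u v : ℝ) : Matrix (Fin 2) (Fin 2) ℝ :=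
  (u ^ a * v ^ b) •
    !![a * (a - 1) / u ^ 2, a * b / (u * v); a * b / (u * v), b * (b - 1) / v ^ 2]

theorem hess_eq_monomialHess_add {f : ℝ → ℝ → ℝ} {a b c d u v : ℝ}
    (hf : ∀ x y, 0 < x → 0 < y → f x y = x ^ a * y ^ b + x ^ c * y ^ d)
    (hu : 0 < u) (hv : 0 < v) :
    hess f u v = monomialHess a b u v + monomialHess c d u v := by
  have hquadrant : ∀ᶠ q : ℝ × ℝ in 𝓝 (u, v), 0 < q.1 ∧ 0 < q.2 :=
    (isOpen_Ioi.prod isOpen_Ioi).mem_nhds ⟨hu, hv⟩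
  have hfu : ∀ᶠ q in 𝓝 (u, v), HasDerivAt (fun x => f x q.2)
      (a * (q.1 ^ (a - 1) * q.2 ^ b) + c * (q.1 ^ (c - 1) * q.2 ^ d)) q.1 := by
    filter_upwards [hquadrant] with q ⟨hx, hy⟩
    refine ((hasDerivAt_monomial_left a b hx).add
      (hasDerivAt_monomial_left c d hx)).congr_of_eventuallyEq ?_
    filter_upwards [lt_mem_nhds hx] with x hx' using hf x q.2 hx' hy
  have hfv : ∀ᶠ q in 𝓝 (u, v), HasDerivAt (fun y => f q.1 y)
      (b * (q.1 ^ a * q.2 ^ (b - 1)) + d * (q.1 ^ c * q.2 ^ (d - 1))) q.2 := by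
    filter_upwards [hquadrant] with q ⟨hx, hy⟩
    refine ((hasDerivAt_monomial_right a b hy).add
      (hasDerivAt_monomial_right c d hy)).congr_of_eventuallyEq ?_
    filter_upwards [lt_mem_nhds hy] with y hy' using hf q.1 y hx hy'
  rw [hess_eq_of_hasDerivAt
    (fu := fun x y => a * (x ^ (a - 1) * y ^ b) + c * (x ^ (c - 1) * y ^ d))
    (fv := fun x y => b * (x ^ a * y ^ (b - 1)) + d * (x ^ c * y ^ (d - 1))) hfu hfv
    (((hasDerivAt_monomial_left _ _ hu).const_mul a).add
      ((hasDerivAt_monomial_left _ _ hu).const_mul c))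
    (((hasDerivAt_monomial_right _ _ hv).const_mul a).add
      ((hasDerivAt_monomial_right _ _ hv).const_mul c))
    (((hasDerivAt_monomial_left _ _ hu).const_mul b).add
      ((hasDerivAt_monomial_left _ _ hu).const_mul d))
    (((hasDerivAt_monomial_right _ _ hv).const_mul b).add
      ((hasDerivAt_monomial_right _ _ hv).const_mul d))]
  ext i j
  fin_cases i <;> fin_cases j <;>
    simp only [Fin.zero_eta, Fin.mk_one, monomialHess, Matrix.add_apply, Matrix.smul_apply,
      of_apply, cons_val', cons_val_zero, cons_val_one, cons_val_fin_one, smul_eq_mul,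
      rpow_sub_one hu.ne', rpow_sub_one hv.ne'] <;>
    field_simp

section Dissipation

variable {u v : ℝ}

theorem monomialHess_mul_eq_zero (a : ℝ) (hu : 0 < u) (hv : 0 < v) :
    monomialHess a (1 - a) u v * !![1, u / v; v / u, 1] = 0 := by
  rw [monomialHess, smul_mul, mul_fin_two]
  ext i j
  fin_cases i <;> fin_cases j <;>
    simp only [Fin.zero_eta, Fin.mk_one, Matrix.smul_apply, of_apply, cons_val', cons_val_zero,
      cons_val_one, cons_val_fin_one, Matrix.zero_apply, smul_eq_mul] <;>
    field_simp <;> ring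

theorem dotProduct_monomialHess_mulVec (c ux vx : ℝ) (hu : 0 < u) (hv : 0 < v) :
    ![ux, vx] ⬝ᵥ monomialHess c c u v *ᵥ (!![1, u / v; v / u, 1] *ᵥ ![ux, vx])
      = c * (2 * c - 1) * (u ^ c * v ^ c) / (u * v) ^ 2 * (v * ux + u * vx) ^ 2 := by
  simp only [monomialHess, smul_mulVec, vec2_dotProduct, mulVec, of_apply, cons_val',
    cons_val_zero, cons_val_one, cons_val_fin_one, Pi.smul_apply, smul_eq_mul]
  field_simp
  ring

end Dissipation

theorem diffusion_entropy_dissipation_full_general (k p : ℝ)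
    (u v ux vx : ℝ) (hu : 0 < u) (hv : 0 < v)
    (B : Matrix (Fin 2) (Fin 2) ℝ) (hB : B = !![1, u / v; v / u, 1])
    (Ekp : ℝ → ℝ → ℝ)
    (hEkp : ∀ a b, Ekp a b = (a * b) ^ (-k) + a ^ (p + 1 / 2) * b ^ (1 / 2 - p)) :
    ![ux, vx] ⬝ᵥ (hess Ekp u v).mulVec (B.mulVec ![ux, vx])
      = k * (2 * k + 1) * (u * v) ^ (-k - 2) * (v * ux + u * vx) ^ 2 := by
  have hhess : hess Ekp u v
      = monomialHess (-k) (-k) u v + monomialHess (p + 1 / 2) (1 - (p + 1 / 2)) u v :=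
    hess_eq_monomialHess_add (fun x y hx hy => by
      rw [hEkp, mul_rpow hx.le hy.le, show 1 / 2 - p = 1 - (p + 1 / 2) by ring]) hu hv
  rw [hhess, add_mulVec, dotProduct_add, hB, mulVec_mulVec (M := monomialHess _ (1 - _) u v),
    monomialHess_mul_eq_zero _ hu hv, zero_mulVec, dotProduct_zero, add_zero,
    dotProduct_monomialHess_mulVec _ _ _ hu hv, ← mul_rpow hu.le hv.le,
    rpow_sub (mul_pos hu hv), rpow_two]
  ring

theorem diffusion_entropy_dissipation_full (k p : ℝ) (hk : 0 < k) (hp : 1 / 2 ≤ p)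
    (u v ux vx : ℝ) (hu : 0 < u) (hv : 0 < v)
    (B : Matrix (Fin 2) (Fin 2) ℝ) (hB : B = !![1, u / v; v / u, 1])
    (Ekp : ℝ → ℝ → ℝ)
    (hEkp : ∀ a b, Ekp a b = (a * b) ^ (-k) + a ^ (p + 1 / 2) * b ^ (1 / 2 - p)) :
    ![ux, vx] ⬝ᵥ (hess Ekp u v).mulVec (B.mulVec ![ux, vx])
      = k * (2 * k + 1) * (u * v) ^ (-k - 2) * (v * ux + u * vx) ^ 2 :=
  diffusion_entropy_dissipation_full_general k p u v ux vx hu hv B hB Ekp hEkp
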